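/- Fix a time series x of length n with values in ℝ^d and a warping path w of order m × n with warping matrix W and valence matrix V. Then the function F : (ℝ^d)^m → ℝ, F(p) = C_w(p,x), is differentiable everywhere, and its gradient at p is 2(Vp − Wx), i.e., for each time point i ∈ {1,…,m}, the partial gradient of F with respect to p_i ∈ ℝ^d equals 2(V_{ii} p_i − Σ_{j=1}^n W_{ij} x_j). -/

import Mathlib

open scoped RealInnerProductSpace

/-- A warping path of order `m × n` (0-based indexing: point `(i,j)` of the paper's
`{1,…,m} × {1,…,n}` corresponds to `(⟨i-1⟩, ⟨j-1⟩) : Fin m × Fin n`). -/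
structure WarpingPath (m n : ℕ) where
  steps : List (Fin m × Fin n)
  ne : steps ≠ []
  head_fst : (steps.head ne).1.val = 0
  head_snd : (steps.head ne).2.val = 0
  last_fst : (steps.getLast ne).1.val = m - 1
  last_snd : (steps.getLast ne).2.val = n - 1
  step : ∀ l : ℕ, (h : l + 1 < steps.length) →
    ((steps.get ⟨l + 1, h⟩).1.val = (steps.get ⟨l, Nat.lt_of_succ_lt h⟩).1.val + 1 ∧
      (steps.get ⟨l + 1, h⟩).2.val = (steps.get ⟨l, Nat.lt_of_succ_lt h⟩).2.val) ∨
    ((steps.get ⟨l + 1, h⟩).1.val = (steps.get ⟨l, Nat.lt_of_succ_lt h⟩).1.val ∧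
      (steps.get ⟨l + 1, h⟩).2.val = (steps.get ⟨l, Nat.lt_of_succ_lt h⟩).2.val + 1) ∨
    ((steps.get ⟨l + 1, h⟩).1.val = (steps.get ⟨l, Nat.lt_of_succ_lt h⟩).1.val + 1 ∧
      (steps.get ⟨l + 1, h⟩).2.val = (steps.get ⟨l, Nat.lt_of_succ_lt h⟩).2.val + 1)

/-- The cost `C_w(x,y) = Σ_l ‖x_{i_l} - y_{j_l}‖²` of aligning `x` and `y` along `w`. -/
noncomputable def cost {m n d : ℕ} (x : Fin m → EuclideanSpace ℝ (Fin d))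
    (y : Fin n → EuclideanSpace ℝ (Fin d)) (w : WarpingPath m n) : ℝ :=
  (w.steps.map (fun p => ‖x p.1 - y p.2‖ ^ 2)).sum

/-- The DTW distance `dtw(x,y) = min { √C_w(x,y) : w ∈ W_{m,n} }`. -/
noncomputable def dtw {m n d : ℕ} (x : Fin m → EuclideanSpace ℝ (Fin d))
    (y : Fin n → EuclideanSpace ℝ (Fin d)) : ℝ :=
  ⨅ w : WarpingPath m n, Real.sqrt (cost x y w)

/-- The warping matrix `W` of a warping path. -/
def warpMat {m n : ℕ} (w : WarpingPath m n) (i : Fin m) (j : Fin n) : ℕ :=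
  if (i, j) ∈ w.steps then 1 else 0

/-- The diagonal entries `V_{ii} = Σ_j W_{ij}` of the valence matrix of a warping path. -/
def valence {m n : ℕ} (w : WarpingPath m n) (i : Fin m) : ℕ :=
  ∑ j : Fin n, warpMat w i j

/-! The coordinate sum `i + j` strictly increases along a warping path, so its points are
distinct and `C_w(p, x) = Σ_{i,j} W_{ij} ‖p_i - x_j‖²`. Each summand has derivative
`v ↦ 2 W_{ij} ⟪p_i - x_j, v_i⟫`, and summing over `j` collects these into
`⟪2 (V_{ii} p_i - Σ_j W_{ij} x_j), v_i⟫`. -/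

lemma WarpingPath.coord_sum_lt {m n : ℕ} (w : WarpingPath m n) {a b : ℕ} (hab : a < b)
    (hb : b < w.steps.length) :
    (w.steps[a]'(hab.trans hb)).1.val + (w.steps[a]'(hab.trans hb)).2.val <
      (w.steps[b]).1.val + (w.steps[b]).2.val := by
  induction b with
  | zero => omega
  | succ b ih =>
    have hstep := w.step b hb
    simp only [List.get_eq_getElem] at hstep
    rcases Nat.lt_succ_iff_lt_or_eq.mp hab with hab | rfl
    · have := ih hab (Nat.lt_of_succ_lt hb)
      omega
    · omega

lemma WarpingPath.nodup {m n : ℕ} (w : WarpingPath m n) : w.steps.Nodup :=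
  List.pairwise_iff_getElem.mpr fun _ _ _ hb hab heq => by
    have := w.coord_sum_lt hab hb
    rw [heq] at this
    omega

lemma WarpingPath.sum_map_eq_sum_warpMat {m n : ℕ} (w : WarpingPath m n)
    (f : Fin m × Fin n → ℝ) :
    (w.steps.map f).sum = ∑ i, ∑ j, (warpMat w i j : ℝ) * f (i, j) := by
  rw [← List.sum_toFinset f w.nodup, ← Fintype.sum_prod_type']
  simp only [warpMat, Nat.cast_ite, Nat.cast_one, Nat.cast_zero, ite_mul, one_mul, zero_mul,
    ← Finset.sum_filter]
  exact Finset.sum_congr (by ext; simp) fun _ _ => rfl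

lemma cost_eq_sum_warpMat {m n d : ℕ} (p : Fin m → EuclideanSpace ℝ (Fin d))
    (x : Fin n → EuclideanSpace ℝ (Fin d)) (w : WarpingPath m n) :
    cost p x w = ∑ i, ∑ j, (warpMat w i j : ℝ) * ‖p i - x j‖ ^ 2 :=
  w.sum_map_eq_sum_warpMat _

lemma sum_warpMat_smul_sub {m n : ℕ} {E : Type*} [AddCommGroup E] [Module ℝ E]
    (w : WarpingPath m n) (i : Fin m) (a : E) (x : Fin n → E) :
    ∑ j, (warpMat w i j : ℝ) • (a - x j) =
      (valence w i : ℝ) • a - ∑ j, (warpMat w i j : ℝ) • x j := by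
  simp only [smul_sub, Finset.sum_sub_distrib, ← Finset.sum_smul, valence, Nat.cast_sum]

lemma hasFDerivAt_norm_apply_sub_sq {ι E : Type*} [Fintype ι] [NormedAddCommGroup E]
    [InnerProductSpace ℝ E] (i : ι) (y : E) (p : ι → E) :
    HasFDerivAt (fun q : ι → E => ‖q i - y‖ ^ 2)
      ((2 : ℝ) • (innerSL ℝ (p i - y)).comp (ContinuousLinearMap.proj i)) p := by
  have h := ((hasFDerivAt_apply i p).sub_const y).norm_sq
  rwa [← Nat.cast_smul_eq_nsmul ℝ, Nat.cast_ofNat] at h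

lemma hasFDerivAt_cost {m n d : ℕ} (x : Fin n → EuclideanSpace ℝ (Fin d))
    (w : WarpingPath m n) (p : Fin m → EuclideanSpace ℝ (Fin d)) :
    HasFDerivAt (fun q => cost q x w)
      (∑ i, (innerSL ℝ ((2 : ℝ) • ((valence w i : ℝ) • p i -
        ∑ j, (warpMat w i j : ℝ) • x j))).comp (ContinuousLinearMap.proj i)) p := by
  simp only [cost_eq_sum_warpMat]
  refine (HasFDerivAt.fun_sum fun i _ => HasFDerivAt.fun_sum fun j _ =>
    (hasFDerivAt_norm_apply_sub_sq i (x j) p).const_mul _).congr_fderiv ?_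
  ext v
  simp only [_root_.sum_apply, _root_.smul_apply,
    ContinuousLinearMap.comp_apply, ContinuousLinearMap.proj_apply, innerSL_apply_apply,
    ← sum_warpMat_smul_sub, Finset.smul_sum, sum_inner, real_inner_smul_left, smul_eq_mul]
  exact Fintype.sum_congr _ _ fun i => Fintype.sum_congr _ _ fun j => mul_left_comm _ _ _

/-- For fixed `x` and a warping path `w` with warping matrix `W` and valence
matrix `V`, the map `F : p ↦ C_w(p,x)` is differentiable everywhere with gradient
`2(Vp - Wx)`; i.e. `DF(p)v = Σ_i ⟪2(V_{ii} p_i - Σ_j W_{ij} x_j), v_i⟫`. -/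
theorem stmt8 (m n d : ℕ) (x : Fin n → EuclideanSpace ℝ (Fin d)) (w : WarpingPath m n) :
    Differentiable ℝ (fun p : Fin m → EuclideanSpace ℝ (Fin d) => cost p x w) ∧
    ∀ p v : Fin m → EuclideanSpace ℝ (Fin d),
      fderiv ℝ (fun q : Fin m → EuclideanSpace ℝ (Fin d) => cost q x w) p v =
        ∑ i : Fin m,
          ⟪(2 : ℝ) • ((valence w i : ℝ) • p i - ∑ j : Fin n, (warpMat w i j : ℝ) • x j),
            v i⟫ := by
  refine ⟨fun p => (hasFDerivAt_cost x w p).differentiableAt, fun p v => ?_⟩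
  simp only [(hasFDerivAt_cost x w p).fderiv, _root_.sum_apply, ContinuousLinearMap.comp_apply,
    ContinuousLinearMap.proj_apply, innerSL_apply_apply]
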